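/- arXiv:2406.02749 — 2 statements merged into one kernel-verified Lean document; each statement's English description precedes it below -/
import Mathlib

section
/- For matrices B ∈ ℝ^{m×p} and C ∈ ℝ^{n×q}, the leverage score of row (i,j) of the Kronecker product B ⊗ C factorizes as l_{(i,j)}(B ⊗ C) = l_i(B) · l_j(C). -/
open Matrix Kronecker

/-- The Moore–Penrose pseudoinverse of a real matrix, defined (noncomputably) as
some matrix satisfying the four Penrose conditions. -/
noncomputable def moorePenrose {m n : Type*} [Fintype m] [Fintype n]
    (A : Matrix m n ℝ) : Matrix n m ℝ :=
  Classical.epsilon fun Ap : Matrix n m ℝ =>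
    A * Ap * A = A ∧ Ap * A * Ap = Ap ∧ (A * Ap)ᵀ = A * Ap ∧ (Ap * A)ᵀ = Ap * A

/-- The `i`-th leverage score `l_i(A) = A[i,:] (AᵀA)⁺ A[i,:]ᵀ`. -/
noncomputable def leverageScore {m n : Type*} [Fintype m] [Fintype n]
    (A : Matrix m n ℝ) (i : m) : ℝ :=
  A i ⬝ᵥ (moorePenrose (Aᵀ * A) *ᵥ A i)

def IsMP {m n : Type*} [Fintype m] [Fintype n]
    (A : Matrix m n ℝ) (Ap : Matrix n m ℝ) : Prop :=
  A * Ap * A = A ∧ Ap * A * Ap = Ap ∧ (A * Ap)ᵀ = A * Ap ∧ (Ap * A)ᵀ = Ap * A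

lemma isMP_unique {m n : Type*} [Fintype m] [Fintype n]
    {A : Matrix m n ℝ} {X Y : Matrix n m ℝ}
    (hX : IsMP A X) (hY : IsMP A Y) : X = Y := by
  obtain ⟨a1, a2, a3, a4⟩ := hX
  obtain ⟨b1, b2, b3, b4⟩ := hY
  have e1 : A * X = A * Y := by
    calc A * X = (A * X)ᵀ := a3.symm
      _ = Xᵀ * Aᵀ := transpose_mul _ _
      _ = Xᵀ * (A * Y * A)ᵀ := by rw [b1]
      _ = Xᵀ * Aᵀ * (A * Y)ᵀ := by rw [transpose_mul, ← Matrix.mul_assoc]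
      _ = (A * X)ᵀ * (A * Y)ᵀ := by rw [← transpose_mul]
      _ = (A * X) * (A * Y) := by rw [a3, b3]
      _ = A * Y := by rw [← Matrix.mul_assoc, Matrix.mul_assoc A X A, ← Matrix.mul_assoc, a1]
  have e2 : X * A = Y * A := by
    calc X * A = (X * A)ᵀ := a4.symm
      _ = Aᵀ * Xᵀ := transpose_mul _ _
      _ = (A * Y * A)ᵀ * Xᵀ := by rw [b1]
      _ = (Y * A)ᵀ * (Aᵀ * Xᵀ) := by
          rw [transpose_mul (A * Y) A, transpose_mul A Y, transpose_mul Y A]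
          simp only [Matrix.mul_assoc]
      _ = (Y * A)ᵀ * (X * A)ᵀ := by rw [← transpose_mul]
      _ = (Y * A) * (X * A) := by rw [a4, b4]
      _ = Y * A := by rw [Matrix.mul_assoc, ← Matrix.mul_assoc A X A, a1]
  calc X = X * A * X := a2.symm
    _ = X * (A * Y) := by rw [Matrix.mul_assoc, e1]
    _ = (Y * A) * Y := by rw [← Matrix.mul_assoc, e2]
    _ = Y := b2

lemma exists_isMP_of_isHermitian {k : Type*} [Fintype k] [DecidableEq k]
    {M : Matrix k k ℝ} (hM : M.IsHermitian) : ∃ P, IsMP M P := by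
  set U : Matrix k k ℝ := (hM.eigenvectorUnitary : Matrix k k ℝ) with hUdef
  have hU2 : star U * U = 1 := mem_unitaryGroup_iff'.mp hM.eigenvectorUnitary.2
  set d : k → ℝ := hM.eigenvalues with hd
  have hspec : M = U * diagonal d * star U := by
    have h := hM.spectral_theorem
    have h2 : (RCLike.ofReal ∘ hM.eigenvalues : k → ℝ) = d := by
      funext x; simp [hd]
    rwa [h2] at h
  have key : ∀ e f : k → ℝ,
      (U * diagonal e * star U) * (U * diagonal f * star U)
        = U * diagonal (fun i => e i * f i) * star U := by
    intro e f
    calc (U * diagonal e * star U) * (U * diagonal f * star U)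
        = U * diagonal e * (star U * U) * (diagonal f * star U) := by
          simp only [Matrix.mul_assoc]
      _ = U * (diagonal e * diagonal f) * star U := by
          rw [hU2, mul_one]; simp only [Matrix.mul_assoc]
      _ = U * diagonal (fun i => e i * f i) * star U := by
          rw [diagonal_mul_diagonal]
  have hsU : star U = Uᵀ := by
    rw [star_eq_conjTranspose, conjTranspose_eq_transpose_of_trivial]
  have keyT : ∀ e : k → ℝ, (U * diagonal e * star U)ᵀ = U * diagonal e * star U := by
    intro e
    rw [hsU, transpose_mul, transpose_mul, diagonal_transpose, transpose_transpose,
      ← Matrix.mul_assoc]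
  have hdd : (fun i => d i * (d i)⁻¹ * d i) = d := by
    funext x
    by_cases h : d x = 0
    · simp [h]
    · rw [mul_inv_cancel₀ h, one_mul]
  have hdd' : (fun i => (d i)⁻¹ * d i * (d i)⁻¹) = fun i => (d i)⁻¹ := by
    funext x
    by_cases h : d x = 0
    · simp [h]
    · rw [inv_mul_cancel₀ h, one_mul]
  refine ⟨U * diagonal (fun i => (d i)⁻¹) * star U, ?_, ?_, ?_, ?_⟩
  · rw [hspec, key, key, hdd]
  · rw [hspec, key, key, hdd']
  · rw [hspec, key, keyT]
  · rw [hspec, key, keyT]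

lemma dot_kron {p q : Type*} [Fintype p] [Fintype q] (v : p → ℝ) (w : q → ℝ)
    (M1 : Matrix p p ℝ) (M2 : Matrix q q ℝ) :
    (fun kl : p × q => v kl.1 * w kl.2) ⬝ᵥ ((M1 ⊗ₖ M2) *ᵥ fun kl => v kl.1 * w kl.2)
      = (v ⬝ᵥ (M1 *ᵥ v)) * (w ⬝ᵥ (M2 *ᵥ w)) := by
  simp only [dotProduct, mulVec, kroneckerMap_apply, Fintype.sum_prod_type]
  have inner : ∀ (k : p) (l : q),
      (∑ k' : p, ∑ l' : q, M1 k k' * M2 l l' * (v k' * w l'))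
        = (∑ k' : p, M1 k k' * v k') * (∑ l' : q, M2 l l' * w l') := by
    intro k l
    rw [Finset.sum_mul_sum]
    apply Finset.sum_congr rfl; intro k' _
    apply Finset.sum_congr rfl; intro l' _
    ring
  simp only [inner]
  rw [Finset.sum_mul_sum]
  apply Finset.sum_congr rfl; intro k _
  apply Finset.sum_congr rfl; intro l _
  ring

lemma isMP_moorePenrose {m n : Type*} [Fintype m] [Fintype n]
    (A : Matrix m n ℝ) (h : ∃ P, IsMP A P) : IsMP A (moorePenrose A) :=
  Classical.epsilon_spec h

lemma isHermitian_transpose_mul_self_real {m n : Type*} [Fintype m] [Fintype n]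
    (A : Matrix m n ℝ) : (Aᵀ * A).IsHermitian := by
  have h := isHermitian_conjTranspose_mul_self A
  rwa [conjTranspose_eq_transpose_of_trivial] at h

lemma isMP_kronecker {p q : Type*} [Fintype p] [Fintype q] [DecidableEq p] [DecidableEq q]
    {G1 : Matrix p p ℝ} {G2 : Matrix q q ℝ} {P1 : Matrix p p ℝ} {P2 : Matrix q q ℝ}
    (h1 : IsMP G1 P1) (h2 : IsMP G2 P2) : IsMP (G1 ⊗ₖ G2) (P1 ⊗ₖ P2) := by
  obtain ⟨a1, a2, a3, a4⟩ := h1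
  obtain ⟨b1, b2, b3, b4⟩ := h2
  refine ⟨?_, ?_, ?_, ?_⟩
  · rw [← mul_kronecker_mul, ← mul_kronecker_mul, a1, b1]
  · rw [← mul_kronecker_mul, ← mul_kronecker_mul, a2, b2]
  · rw [← mul_kronecker_mul, ← kroneckerMap_transpose, a3, b3]
  · rw [← mul_kronecker_mul, ← kroneckerMap_transpose, a4, b4]

/-- The leverage score of row `(i, j)` of the Kronecker product `B ⊗ C`
factorizes as `l_{(i,j)}(B ⊗ C) = l_i(B) · l_j(C)`. -/
theorem leverageScore_kronecker (m n p q : ℕ)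
    (B : Matrix (Fin m) (Fin p) ℝ) (C : Matrix (Fin n) (Fin q) ℝ)
    (i : Fin m) (j : Fin n) :
    leverageScore (B ⊗ₖ C) (i, j) = leverageScore B i * leverageScore C j := by
  have hB := isMP_moorePenrose (Bᵀ * B)
    (exists_isMP_of_isHermitian (isHermitian_transpose_mul_self_real B))
  have hC := isMP_moorePenrose (Cᵀ * C)
    (exists_isMP_of_isHermitian (isHermitian_transpose_mul_self_real C))
  have hGram : (B ⊗ₖ C)ᵀ * (B ⊗ₖ C) = (Bᵀ * B) ⊗ₖ (Cᵀ * C) := by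
    rw [← kroneckerMap_transpose, ← mul_kronecker_mul]
  have hK : IsMP ((Bᵀ * B) ⊗ₖ (Cᵀ * C)) (moorePenrose (Bᵀ * B) ⊗ₖ moorePenrose (Cᵀ * C)) :=
    isMP_kronecker hB hC
  have hmp : moorePenrose ((B ⊗ₖ C)ᵀ * (B ⊗ₖ C))
      = moorePenrose (Bᵀ * B) ⊗ₖ moorePenrose (Cᵀ * C) := by
    rw [hGram]
    exact isMP_unique (isMP_moorePenrose _ ⟨_, hK⟩) hK
  unfold leverageScore
  rw [hmp]
  have hrow : (B ⊗ₖ C) (i, j) = fun kl : Fin p × Fin q => B i kl.1 * C j kl.2 := rfl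
  rw [hrow]
  exact dot_kron (B i) (C j) _ _
end

section
/- Let A₁,…,A_j be left-orthonormal cores (A_k^L has orthonormal columns, R_0 = 1) and let p(s_1,…,s_j) = (1/R_j)·‖A_{≤j}[(s_1,…,s_j),:]‖² be the normalized squared-row-norm distribution on index tuples. Then for any 1 ≤ k ≤ j and fixed s_{k+1},…,s_j, the marginal probability Σ_{s_1,…,s_{k-1}} p(s_1,…,s_j) equals (1/R_j)·Tr[H_{>k}ᵀ · A_k[:,s_k,:]ᵀ · A_k[:,s_k,:] · H_{>k}], where H_{>k} = A_{k+1}[:,s_{k+1},:]·…·A_j[:,s_j,:]. -/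
open Matrix

variable (R I : ℕ → ℕ)

/-- The `i`-th lateral ttSlice `A_k[:, i, :]` of the `k`-th TT-core. -/
def ttSlice (𝒜 : (k : ℕ) → Fin (R k) → Fin (I k) → Fin (R (k + 1)) → ℝ)
    (k : ℕ) (i : Fin (I k)) : Matrix (Fin (R k)) (Fin (R (k + 1))) ℝ :=
  fun a b => 𝒜 k a i b

/-- Entry of the chain matricization `A_{≤j}`:
`A_{≤j}[(i_1,…,i_j), r_j] = Σ_{r_0,…,r_{j-1}} ∏_{k=1}^j A_k(r_{k-1}, i_k, r_k)`. -/
def chainEntry (𝒜 : (k : ℕ) → Fin (R k) → Fin (I k) → Fin (R (k + 1)) → ℝ)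
    (j : ℕ) (s : ∀ k : Fin j, Fin (I k)) (rj : Fin (R j)) : ℝ :=
  ∑ p : ∀ k : Fin j, Fin (R k), ∏ k : Fin j,
    𝒜 k (p k) (s k)
      (if h : (k : ℕ) + 1 < j then p ⟨k + 1, h⟩
       else Fin.cast (congrArg R (by have := k.isLt; omega)) rj)

/-- Product of lateral slices `A₁[:,s₁,:] ⋯ A_j[:,s_j,:]`. -/
def sliceProd (𝒜 : (k : ℕ) → Fin (R k) → Fin (I k) → Fin (R (k + 1)) → ℝ) :
    (j : ℕ) → (∀ k : Fin j, Fin (I k)) → Matrix (Fin (R 0)) (Fin (R j)) ℝ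
  | 0, _ => 1
  | n + 1, s =>
      sliceProd 𝒜 n (fun k => s ⟨k.1, Nat.lt_succ_of_lt k.2⟩) *
        ttSlice R I 𝒜 n (s ⟨n, Nat.lt_succ_self n⟩)

/-- Product of lateral slices from position `a` (inclusive), `d` slices long:
`A_{a+1}[:,s_{a+1},:] ⋯ A_{a+d}[:,s_{a+d},:]`. -/
def prodFrom (𝒜 : (k : ℕ) → Fin (R k) → Fin (I k) → Fin (R (k + 1)) → ℝ)
    (j : ℕ) (s : ∀ k : Fin j, Fin (I k)) (a : ℕ) :
    (d : ℕ) → a + d ≤ j → Matrix (Fin (R a)) (Fin (R (a + d))) ℝ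
  | 0, _ => (1 : Matrix (Fin (R a)) (Fin (R a)) ℝ)
  | d + 1, h =>
      prodFrom 𝒜 j s a d (by omega) * ttSlice R I 𝒜 (a + d) (s ⟨a + d, by omega⟩)

/-!
Since `R₀ = 1`, the row `(s₁,…,s_j)` of `A_{≤j}` is the single row of the slice product
`M = A₁[s₁] ⋯ A_j[s_j]`, so its squared norm is `Tr(Mᵀ M)`. Writing `M = P_u B` with
`P_u = A₁[u₁] ⋯ A_{k-1}[u_{k-1}]` and `B = A_k[s_k] H_{>k}`, the marginal becomes
`Tr(Bᵀ (Σ_u P_uᵀ P_u) B)`, and left-orthonormality of the cores gives `Σ_u P_uᵀ P_u = 1` by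
induction on the number of cores.
-/

open Finset

theorem sum_transpose_mul_self_mul_of_sum_eq_one {ι m n o α : Type*} [Fintype ι] [Fintype m]
    [Fintype n] [DecidableEq n] [CommSemiring α] (P : ι → Matrix m n α)
    (hP : ∑ u, (P u)ᵀ * P u = 1) (B : Matrix n o α) :
    ∑ u, (P u * B)ᵀ * (P u * B) = Bᵀ * B := by
  calc ∑ u, (P u * B)ᵀ * (P u * B) = Bᵀ * (∑ u, (P u)ᵀ * P u) * B := by
        simp only [Matrix.mul_sum, Matrix.sum_mul, transpose_mul, Matrix.mul_assoc]
    _ = Bᵀ * B := by rw [hP, Matrix.mul_one]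

theorem sum_sq_sum_eq_trace_transpose_mul_self {m n α : Type*} [Fintype m] [Unique m]
    [Fintype n] [CommSemiring α] (M : Matrix m n α) :
    ∑ r, (∑ i, M i r) ^ 2 = trace (Mᵀ * M) := by
  simp [trace, mul_apply, sq]

theorem Fin.snoc_mk_of_lt {f : ℕ → ℕ} {n : ℕ} (q : ∀ i : Fin n, Fin (f i)) (x : Fin (f n))
    {m : ℕ} (hm : m < n) :
    Fin.snoc (α := fun i : Fin (n + 1) => Fin (f i)) q x ⟨m, by omega⟩ = q ⟨m, hm⟩ :=
  Fin.snoc_castSucc (α := fun i : Fin (n + 1) => Fin (f i)) x q ⟨m, hm⟩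

theorem Fin.snoc_mk_of_eq {f : ℕ → ℕ} {n : ℕ} (q : ∀ i : Fin n, Fin (f i)) (x : Fin (f n))
    {m : ℕ} (hm : m = n) :
    Fin.snoc (α := fun i : Fin (n + 1) => Fin (f i)) q x ⟨m, by omega⟩ =
      Fin.cast (congrArg f hm.symm) x := by
  subst hm
  exact Fin.snoc_last (α := fun i : Fin (m + 1) => Fin (f i)) x q

section Chain

variable {R I} (𝒜 : (k : ℕ) → Fin (R k) → Fin (I k) → Fin (R (k + 1)) → ℝ)

theorem chainEntry_succ (n : ℕ) (s : ∀ k : Fin (n + 1), Fin (I k)) (r : Fin (R (n + 1))) :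
    chainEntry R I 𝒜 (n + 1) s r =
      ∑ x : Fin (R n), chainEntry R I 𝒜 n (fun k => s k.castSucc) x * 𝒜 n x (s (Fin.last n)) r := by
  rw [chainEntry, ← (Fin.snocEquiv fun k : Fin (n + 1) => Fin (R k)).sum_comp,
    Fintype.sum_prod_type]
  simp only [chainEntry, Fin.snocEquiv, Equiv.coe_fn_mk, sum_mul]
  refine sum_congr rfl fun x _ => sum_congr rfl fun q _ => ?_
  rw [Fin.prod_univ_castSucc]
  congr 1
  · refine prod_congr rfl fun k _ => ?_
    simp only [Fin.val_castSucc, Fin.snoc_castSucc, dif_pos (Nat.succ_lt_succ k.isLt)]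
    split_ifs with hk
    · rw [Fin.snoc_mk_of_lt q x hk]
    · rw [Fin.snoc_mk_of_eq q x (by omega)]
  · simp only [Fin.val_last, Fin.snoc_last, lt_irrefl, dite_false]
    rfl

theorem chainEntry_eq_sum_sliceProd :
    ∀ (n : ℕ) (s : ∀ k : Fin n, Fin (I k)) (r : Fin (R n)),
      chainEntry R I 𝒜 n s r = ∑ r₀, sliceProd R I 𝒜 n s r₀ r
  | 0, s, r => by simp [chainEntry, sliceProd, one_apply]
  | n + 1, s, r => by
      simp_rw [chainEntry_succ, chainEntry_eq_sum_sliceProd n, sum_mul]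
      rw [sum_comm]
      rfl

theorem sum_sq_chainEntry_eq_trace (hR0 : R 0 = 1) (n : ℕ) (s : ∀ k : Fin n, Fin (I k)) :
    ∑ r, chainEntry R I 𝒜 n s r ^ 2 = trace ((sliceProd R I 𝒜 n s)ᵀ * sliceProd R I 𝒜 n s) := by
  have : Unique (Fin (R 0)) := (finCongr hR0).unique
  simp_rw [chainEntry_eq_sum_sliceProd]
  exact sum_sq_sum_eq_trace_transpose_mul_self (sliceProd R I 𝒜 n s)

theorem sliceProd_snoc (n : ℕ) (q : ∀ k : Fin n, Fin (I k)) (x : Fin (I n)) :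
    sliceProd R I 𝒜 (n + 1) (Fin.snoc (α := fun k : Fin (n + 1) => Fin (I k)) q x) =
      sliceProd R I 𝒜 n q * ttSlice R I 𝒜 n x := by
  rw [sliceProd, Fin.snoc_mk_of_eq q x rfl]
  congr
  funext k
  exact Fin.snoc_mk_of_lt q x k.isLt

theorem sum_transpose_mul_self_sliceProd :
    ∀ n : ℕ, (∀ k < n, ∑ i, (ttSlice R I 𝒜 k i)ᵀ * ttSlice R I 𝒜 k i = 1) →
      ∑ u : ∀ k : Fin n, Fin (I k), (sliceProd R I 𝒜 n u)ᵀ * sliceProd R I 𝒜 n u = 1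
  | 0, _ => by simp [sliceProd]
  | n + 1, hortho => by
      rw [← (Fin.snocEquiv fun k : Fin (n + 1) => Fin (I k)).sum_comp, Fintype.sum_prod_type]
      simp only [Fin.snocEquiv, Equiv.coe_fn_mk, sliceProd_snoc]
      have ih := sum_transpose_mul_self_sliceProd n fun k hk => hortho k (by omega)
      exact (sum_congr rfl fun x _ => sum_transpose_mul_self_mul_of_sum_eq_one _ ih _).trans
        (hortho n (by omega))

theorem sliceProd_add_eq_mul_prodFrom (j : ℕ) (s : ∀ k : Fin j, Fin (I k)) (a : ℕ) :
    ∀ (d : ℕ) (h : a + d ≤ j),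
      sliceProd R I 𝒜 (a + d) (fun k => s ⟨k, by omega⟩) =
        sliceProd R I 𝒜 a (fun k => s ⟨k, by omega⟩) * prodFrom R I 𝒜 j s a d h
  | 0, h => by rw [prodFrom, Matrix.mul_one]; rfl
  | d + 1, h => by
      rw [prodFrom, ← Matrix.mul_assoc, ← sliceProd_add_eq_mul_prodFrom j s a d (by omega)]
      rfl

theorem prodFrom_congr (j : ℕ) (s t : ∀ k : Fin j, Fin (I k)) (a : ℕ)
    (hst : ∀ k : Fin j, a ≤ k → s k = t k) :
    ∀ (d : ℕ) (h : a + d ≤ j), prodFrom R I 𝒜 j s a d h = prodFrom R I 𝒜 j t a d h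
  | 0, _ => rfl
  | d + 1, h => by
      rw [prodFrom, prodFrom, prodFrom_congr j s t a hst d (by omega),
        hst ⟨a + d, by omega⟩ (by simp)]

theorem sliceProd_splice (κ d : ℕ) (u : ∀ k : Fin κ, Fin (I k))
    (t : ∀ k : Fin (κ + 1 + d), Fin (I k)) :
    sliceProd R I 𝒜 (κ + 1 + d) (fun k => if h : (k : ℕ) < κ then u ⟨k, h⟩ else t k) =
      sliceProd R I 𝒜 κ u *
        (ttSlice R I 𝒜 κ (t ⟨κ, by omega⟩) * prodFrom R I 𝒜 (κ + 1 + d) t (κ + 1) d le_rfl) := by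
  set s : ∀ k : Fin (κ + 1 + d), Fin (I k) := fun k => if h : (k : ℕ) < κ then u ⟨k, h⟩ else t k
  have hprefix : sliceProd R I 𝒜 (κ + 1) (fun k => s ⟨k, by omega⟩) =
      sliceProd R I 𝒜 κ u * ttSlice R I 𝒜 κ (t ⟨κ, by omega⟩) := by
    rw [sliceProd]
    congr 1
    · congr 1
      funext k
      exact dif_pos k.isLt
    · exact congrArg _ (dif_neg (lt_irrefl κ))
  have hsuffix : prodFrom R I 𝒜 (κ + 1 + d) s (κ + 1) d le_rfl =
      prodFrom R I 𝒜 (κ + 1 + d) t (κ + 1) d le_rfl :=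
    prodFrom_congr 𝒜 _ s t (κ + 1) (fun k hk => dif_neg (by omega)) d le_rfl
  rw [← Matrix.mul_assoc, ← hprefix, ← hsuffix]
  exact sliceProd_add_eq_mul_prodFrom 𝒜 _ s (κ + 1) d le_rfl

theorem sum_sq_chainEntry_splice (hR0 : R 0 = 1) {j : ℕ}
    (hortho : ∀ k < j, ∑ i, (ttSlice R I 𝒜 k i)ᵀ * ttSlice R I 𝒜 k i = 1)
    {κ d : ℕ} (hj : κ + 1 + d = j) (t : ∀ k : Fin j, Fin (I k)) :
    ∑ u : ∀ k : Fin κ, Fin (I k),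
        ∑ r, chainEntry R I 𝒜 j (fun k => if h : (k : ℕ) < κ then u ⟨k, h⟩ else t k) r ^ 2 =
      trace ((ttSlice R I 𝒜 κ (t ⟨κ, by omega⟩) * prodFrom R I 𝒜 j t (κ + 1) d hj.le)ᵀ *
        (ttSlice R I 𝒜 κ (t ⟨κ, by omega⟩) * prodFrom R I 𝒜 j t (κ + 1) d hj.le)) := by
  subst hj
  simp_rw [sum_sq_chainEntry_eq_trace 𝒜 hR0, sliceProd_splice, ← trace_sum]
  rw [sum_transpose_mul_self_mul_of_sum_eq_one _
    (sum_transpose_mul_self_sliceProd 𝒜 κ fun k hk => hortho k (by omega))]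

end Chain

-- `κ` is the paper's `k - 1` (positions are 0-based); only the entries of `t` from `κ` on matter.
/-- **Conditional (marginal) distribution for the chain.** Let
`p(s_1,…,s_j) = ‖A_{≤j}[(s_1,…,s_j),:]‖² / R_j` be the normalized
squared-row-norm distribution. For a fixed position `κ` (0-based, the paper's
`k = κ+1`) and fixed `s_{κ+1},…,s_j` (given by `t`), the marginal over
`s_1,…,s_κ` equals `(1/R_j)·Tr[H_{>k}ᵀ Aₖ[:,s_k,:]ᵀ Aₖ[:,s_k,:] H_{>k}]`,
where `H_{>k} = A_{κ+2}[:,s_{κ+2},:] ⋯ A_j[:,s_j,:]` (identity when `κ+1 = j`). -/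
theorem chain_marginal_distribution
    (𝒜 : (k : ℕ) → Fin (R k) → Fin (I k) → Fin (R (k + 1)) → ℝ)
    (j : ℕ) (hR0 : R 0 = 1)
    (hortho : ∀ k, k < j →
      ∑ i : Fin (I k), (ttSlice R I 𝒜 k i)ᵀ * ttSlice R I 𝒜 k i = 1)
    (κ : ℕ) (hκ : κ < j) (t : ∀ m : Fin j, Fin (I m)) :
    ∑ u : ∀ m : Fin κ, Fin (I m),
        (R j : ℝ)⁻¹ *
          ∑ r : Fin (R j),
            chainEntry R I 𝒜 j
              (fun m => if h : (m : ℕ) < κ then u ⟨m.1, h⟩ else t m) r ^ 2 =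
      (R j : ℝ)⁻¹ *
        Matrix.trace
          ((prodFrom R I 𝒜 j t (κ + 1) (j - (κ + 1)) (by omega))ᵀ *
            (ttSlice R I 𝒜 κ (t ⟨κ, hκ⟩))ᵀ *
            ttSlice R I 𝒜 κ (t ⟨κ, hκ⟩) *
            prodFrom R I 𝒜 j t (κ + 1) (j - (κ + 1)) (by omega)) := by
  rw [← mul_sum, sum_sq_chainEntry_splice 𝒜 hR0 hortho (d := j - (κ + 1)) (by omega)]
  simp only [transpose_mul, Matrix.mul_assoc]
end
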